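/- arXiv:2507.04273 — 2 statements merged into one kernel-verified Lean document; each statement's English description precedes it below -/
import Mathlib

section
/- Let 1/n ≪ α ≪ β < 1. Let G be an oriented graph on n vertices and let X, Y ⊆ V(G) (not necessarily disjoint). If the number of edges from Y to X satisfies e(Y,X) = βn², then there are at least (β⁴/32 − α)n² ordered pairs of vertices (x,y) ∈ X × Y that are α-strongly absorbable. -/
open Finset
set_option maxHeartbeats 1000000

/-- An oriented graph: no loops and no 2-cycles. -/
def Oriented {V : Type} (E : V → V → Prop) : Prop :=
  (∀ x, ¬ E x x) ∧ ∀ x y, E x y → ¬ E y x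

/-- Number of edges directed from `Y` to `X`. -/
def edgesBetween {V : Type} [DecidableEq V] (E : V → V → Prop) [DecidableRel E]
    (Y X : Finset V) : ℕ :=
  ((Y ×ˢ X).filter fun p => E p.1 p.2).card

/-- `(u,v)` is `α`-strongly absorbable: it has at least `α n²` strong absorbers,
where a strong absorber is an ordered pair `(w,z)` with `wz, wu, vz ∈ E(G)`. -/
def StronglyAbsorbable {V : Type} [Fintype V] (E : V → V → Prop) [DecidableRel E]
    (α : ℝ) (u v : V) : Prop :=
  (((Finset.univ ×ˢ Finset.univ : Finset (V × V)).filter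
      fun p => E p.1 p.2 ∧ E p.1 u ∧ E v p.2).card : ℝ) ≥ α * (Fintype.card V : ℝ) ^ 2

def absCount {V : Type} [Fintype V] (E : V → V → Prop) [DecidableRel E] (u v : V) : ℕ :=
  ((Finset.univ ×ˢ Finset.univ : Finset (V × V)).filter
      fun p => E p.1 p.2 ∧ E p.1 u ∧ E v p.2).card

lemma absCount_key {V : Type} [Fintype V] [DecidableEq V] (E : V → V → Prop) [DecidableRel E]
    (X Y : Finset V) :
    ∑ q ∈ X ×ˢ Y, absCount E q.1 q.2
      = ∑ p ∈ (Finset.univ ×ˢ Finset.univ : Finset (V × V)),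
          if E p.1 p.2 then (X.filter fun x => E p.1 x).card * (Y.filter fun y => E y p.2).card
          else 0 := by
  have h1 : ∀ q : V × V, absCount E q.1 q.2
      = ∑ p ∈ (Finset.univ ×ˢ Finset.univ : Finset (V × V)),
          if E p.1 p.2 ∧ E p.1 q.1 ∧ E q.2 p.2 then 1 else 0 := by
    intro q; rw [absCount, Finset.card_filter]
  rw [Finset.sum_congr rfl fun q _ => h1 q, Finset.sum_comm]
  refine Finset.sum_congr rfl fun p _ => ?_
  by_cases hE : E p.1 p.2
  · simp only [hE, true_and, if_true]
    have : ∑ q ∈ X ×ˢ Y, (if E p.1 q.1 ∧ E q.2 p.2 then 1 else 0)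
        = ((X ×ˢ Y).filter fun q => E p.1 q.1 ∧ E q.2 p.2).card :=
      (Finset.card_filter _ _).symm
    rw [this, Finset.filter_product (fun x => E p.1 x) (fun y => E y p.2), Finset.card_product]
  · simp [hE]

open scoped Classical in
theorem stmt_3 :
    ∀ β : ℝ, 0 < β → β < 1 → ∃ α₀ : ℝ, 0 < α₀ ∧ ∀ α : ℝ, 0 < α → α ≤ α₀ →
    ∃ n₀ : ℕ, ∀ n : ℕ, n ≥ n₀ →
    ∀ (V : Type) [Fintype V] [DecidableEq V] (E : V → V → Prop) [DecidableRel E],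
      Fintype.card V = n → Oriented E →
      ∀ X Y : Finset V, (edgesBetween E Y X : ℝ) = β * n ^ 2 →
        ((((X ×ˢ Y : Finset (V × V)).filter
            fun p => StronglyAbsorbable E α p.1 p.2).card : ℝ))
          ≥ (β ^ 4 / 32 - α) * n ^ 2 := by
  intro β hβ0 hβ1
  refine ⟨1, one_pos, fun α hα0 _ => ⟨1, fun n hn V _ _ E _ hcard _ X Y hedge => ?_⟩⟩
  classical
  have hn1 : (1:ℝ) ≤ (n:ℝ) := by exact_mod_cast hn
  have hn0 : (0:ℝ) < (n:ℝ) := lt_of_lt_of_le one_pos hn1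
  set nR : ℝ := (n : ℝ) with hnR
  -- degrees
  set dX : V → ℕ := fun w => (X.filter fun x => E w x).card with hdX
  set dY : V → ℕ := fun z => (Y.filter fun y => E y z).card with hdY
  set T : ℕ := ∑ q ∈ X ×ˢ Y, absCount E q.1 q.2 with hT
  have hYle : (Y.card : ℝ) ≤ nR := by
    rw [hnR, ← hcard, ← Finset.card_univ]
    exact_mod_cast Finset.card_le_card (Finset.subset_univ Y)
  have hXle : (X.card : ℝ) ≤ nR := by
    rw [hnR, ← hcard, ← Finset.card_univ]
    exact_mod_cast Finset.card_le_card (Finset.subset_univ X)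
  set Eset : Finset (V × V) := (Y ×ˢ X).filter fun p => E p.1 p.2 with hEset
  have hEcard : (Eset.card : ℝ) = β * nR ^ 2 := by
    simpa [edgesBetween, hEset, hnR] using hedge
  -- bad edge bounds
  have hbad1 : (((Y ×ˢ X).filter fun p =>
      E p.1 p.2 ∧ ¬ (β * nR / 4 ≤ (dX p.1 : ℝ))).card : ℝ) ≤ β * nR / 4 * nR := by
    rw [Finset.card_filter]
    push_cast
    rw [Finset.sum_product]
    have hone : ∀ y ∈ Y, (∑ x ∈ X, if E y x ∧ ¬ (β * nR / 4 ≤ (dX y : ℝ)) then (1:ℝ) else 0)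
        ≤ β * nR / 4 := by
      intro y _
      by_cases hc : (β * nR / 4 ≤ (dX y : ℝ))
      · simp only [hc, not_true_eq_false, and_false, if_false, Finset.sum_const_zero]
        positivity
      · simp only [hc, not_false_eq_true, and_true]
        rw [Finset.sum_boole]
        exact le_of_not_ge hc
    calc (∑ y ∈ Y, ∑ x ∈ X, if E y x ∧ ¬ (β * nR / 4 ≤ (dX y : ℝ)) then (1:ℝ) else 0)
        ≤ ∑ y ∈ Y, β * nR / 4 := Finset.sum_le_sum hone
      _ = Y.card * (β * nR / 4) := by rw [Finset.sum_const, nsmul_eq_mul]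
      _ ≤ nR * (β * nR / 4) := by
          apply mul_le_mul_of_nonneg_right hYle; positivity
      _ = β * nR / 4 * nR := by ring
  have hbad2 : (((Y ×ˢ X).filter fun p =>
      E p.1 p.2 ∧ ¬ (β * nR / 4 ≤ (dY p.2 : ℝ))).card : ℝ) ≤ β * nR / 4 * nR := by
    rw [Finset.card_filter]
    push_cast
    rw [Finset.sum_product, Finset.sum_comm]
    have hone : ∀ x ∈ X, (∑ y ∈ Y, if E y x ∧ ¬ (β * nR / 4 ≤ (dY x : ℝ)) then (1:ℝ) else 0)
        ≤ β * nR / 4 := by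
      intro x _
      by_cases hc : (β * nR / 4 ≤ (dY x : ℝ))
      · simp only [hc, not_true_eq_false, and_false, if_false, Finset.sum_const_zero]
        positivity
      · simp only [hc, not_false_eq_true, and_true]
        rw [Finset.sum_boole]
        exact le_of_not_ge hc
    calc (∑ x ∈ X, ∑ y ∈ Y, if E y x ∧ ¬ (β * nR / 4 ≤ (dY x : ℝ)) then (1:ℝ) else 0)
        ≤ ∑ x ∈ X, β * nR / 4 := Finset.sum_le_sum hone
      _ = X.card * (β * nR / 4) := by rw [Finset.sum_const, nsmul_eq_mul]
      _ ≤ nR * (β * nR / 4) := by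
          apply mul_le_mul_of_nonneg_right hXle; positivity
      _ = β * nR / 4 * nR := by ring
  -- good edges
  set Good : Finset (V × V) := Eset.filter
      (fun p => (β * nR / 4 ≤ (dX p.1 : ℝ)) ∧ (β * nR / 4 ≤ (dY p.2 : ℝ))) with hGoodDef
  have hGoodCard : β * nR ^ 2 / 2 ≤ (Good.card : ℝ) := by
    have hsplit : Good.card + (Eset.filter (fun p =>
        ¬ ((β * nR / 4 ≤ (dX p.1 : ℝ)) ∧ (β * nR / 4 ≤ (dY p.2 : ℝ))))).card = Eset.card :=
      Finset.card_filter_add_card_filter_not _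
    have hsub : (Eset.filter (fun p =>
        ¬ ((β * nR / 4 ≤ (dX p.1 : ℝ)) ∧ (β * nR / 4 ≤ (dY p.2 : ℝ)))))
        ⊆ ((Y ×ˢ X).filter fun p => E p.1 p.2 ∧ ¬ (β * nR / 4 ≤ (dX p.1 : ℝ)))
          ∪ ((Y ×ˢ X).filter fun p => E p.1 p.2 ∧ ¬ (β * nR / 4 ≤ (dY p.2 : ℝ))) := by
      intro p hp
      simp only [hEset, Finset.mem_filter, Finset.mem_union, not_and_or] at hp ⊢
      rcases hp with ⟨⟨hm, he⟩, h | h⟩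
      · exact Or.inl ⟨hm, he, h⟩
      · exact Or.inr ⟨hm, he, h⟩
    have hbadcard : ((Eset.filter (fun p =>
        ¬ ((β * nR / 4 ≤ (dX p.1 : ℝ)) ∧ (β * nR / 4 ≤ (dY p.2 : ℝ))))).card : ℝ)
        ≤ β * nR / 4 * nR + β * nR / 4 * nR := by
      calc ((Eset.filter _).card : ℝ)
          ≤ ((((Y ×ˢ X).filter fun p => E p.1 p.2 ∧ ¬ (β * nR / 4 ≤ (dX p.1 : ℝ)))
            ∪ ((Y ×ˢ X).filter fun p => E p.1 p.2 ∧ ¬ (β * nR / 4 ≤ (dY p.2 : ℝ)))).card : ℝ) := by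
            exact_mod_cast Finset.card_le_card hsub
        _ ≤ _ := by
            have := Finset.card_union_le
              (((Y ×ˢ X).filter fun p => E p.1 p.2 ∧ ¬ (β * nR / 4 ≤ (dX p.1 : ℝ))))
              (((Y ×ˢ X).filter fun p => E p.1 p.2 ∧ ¬ (β * nR / 4 ≤ (dY p.2 : ℝ))))
            have h2 : ((((Y ×ˢ X).filter fun p => E p.1 p.2 ∧ ¬ (β * nR / 4 ≤ (dX p.1 : ℝ)))
              ∪ ((Y ×ˢ X).filter fun p => E p.1 p.2 ∧ ¬ (β * nR / 4 ≤ (dY p.2 : ℝ)))).card : ℝ)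
              ≤ (((Y ×ˢ X).filter fun p => E p.1 p.2 ∧ ¬ (β * nR / 4 ≤ (dX p.1 : ℝ))).card : ℝ)
              + (((Y ×ˢ X).filter fun p => E p.1 p.2 ∧ ¬ (β * nR / 4 ≤ (dY p.2 : ℝ))).card : ℝ) := by
              exact_mod_cast this
            linarith [hbad1, hbad2]
    have hE2 : (Good.card : ℝ) + ((Eset.filter (fun p =>
        ¬ ((β * nR / 4 ≤ (dX p.1 : ℝ)) ∧ (β * nR / 4 ≤ (dY p.2 : ℝ))))).card : ℝ)
        = β * nR ^ 2 := by
      rw [← hEcard]; exact_mod_cast hsplit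
    linarith
  -- lower bound on T
  have hTlow : β * nR / 4 * (β * nR / 4) * Good.card ≤ (T : ℝ) := by
    have hkey := absCount_key E X Y
    have hsubu : Good ⊆ (Finset.univ ×ˢ Finset.univ : Finset (V × V)) := by
      intro p _; simp
    have hnat : ∑ p ∈ Good,
        (if E p.1 p.2 then dX p.1 * dY p.2 else 0) ≤ T := by
      rw [hT, hkey]
      exact Finset.sum_le_sum_of_subset_of_nonneg hsubu (fun _ _ _ => by positivity)
    have hcast : (∑ p ∈ Good, (if E p.1 p.2 then dX p.1 * dY p.2 else 0) : ℝ) ≤ (T : ℝ) := by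
      exact_mod_cast hnat
    rw [Finset.sum_ite_of_true (fun p hp => ?_)] at hcast; swap
    · rw [hGoodDef, hEset] at hp
      simp only [Finset.mem_filter] at hp
      exact hp.1.2
    have hterm : ∀ p ∈ Good, β * nR / 4 * (β * nR / 4) ≤ ((dX p.1 * dY p.2 : ℕ) : ℝ) := by
      intro p hp
      rw [hGoodDef] at hp
      simp only [Finset.mem_filter] at hp
      push_cast
      have h1 := hp.2.1
      have h2 := hp.2.2
      have hnn : (0:ℝ) ≤ β * nR / 4 := by positivity
      exact mul_le_mul h1 h2 hnn (le_trans hnn h1)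
    calc β * nR / 4 * (β * nR / 4) * Good.card
        = ∑ _p ∈ Good, β * nR / 4 * (β * nR / 4) := by
          rw [Finset.sum_const, nsmul_eq_mul]; ring
      _ ≤ ∑ p ∈ Good, ((dX p.1 * dY p.2 : ℕ) : ℝ) := Finset.sum_le_sum hterm
      _ ≤ (T : ℝ) := by exact_mod_cast hcast
  -- upper bound on T
  set P : Finset (V × V) := (X ×ˢ Y).filter (fun p => StronglyAbsorbable E α p.1 p.2) with hP
  have hTup : (T : ℝ) ≤ (P.card : ℝ) * nR ^ 2 + nR ^ 2 * (α * nR ^ 2) := by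
    have hsplit := Finset.sum_filter_add_sum_filter_not (X ×ˢ Y)
      (fun p => StronglyAbsorbable E α p.1 p.2) (fun q => absCount E q.1 q.2)
    have hTsplit : (T:ℝ) = (∑ q ∈ P, (absCount E q.1 q.2 : ℝ))
        + ∑ q ∈ (X ×ˢ Y).filter (fun p => ¬ StronglyAbsorbable E α p.1 p.2),
            (absCount E q.1 q.2 : ℝ) := by
      rw [hT, hP]; push_cast [← hsplit]; ring
    have habs_le : ∀ q : V × V, ((absCount E q.1 q.2 : ℕ) : ℝ) ≤ nR ^ 2 := by
      intro q
      have : absCount E q.1 q.2 ≤ ((Finset.univ ×ˢ Finset.univ : Finset (V × V))).card :=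
        Finset.card_filter_le _ _
      rw [Finset.card_product, Finset.card_univ, hcard] at this
      calc ((absCount E q.1 q.2 : ℕ) : ℝ) ≤ ((n * n : ℕ) : ℝ) := by exact_mod_cast this
        _ = nR ^ 2 := by push_cast [hnR]; ring
    have h1 : (∑ q ∈ P, (absCount E q.1 q.2 : ℝ)) ≤ (P.card : ℝ) * nR ^ 2 := by
      calc (∑ q ∈ P, (absCount E q.1 q.2 : ℝ)) ≤ ∑ _q ∈ P, nR ^ 2 :=
            Finset.sum_le_sum (fun q _ => habs_le q)
        _ = (P.card : ℝ) * nR ^ 2 := by rw [Finset.sum_const, nsmul_eq_mul]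
    have h2 : (∑ q ∈ (X ×ˢ Y).filter (fun p => ¬ StronglyAbsorbable E α p.1 p.2),
        (absCount E q.1 q.2 : ℝ)) ≤ nR ^ 2 * (α * nR ^ 2) := by
      have hle : ∀ q ∈ (X ×ˢ Y).filter (fun p => ¬ StronglyAbsorbable E α p.1 p.2),
          ((absCount E q.1 q.2 : ℕ) : ℝ) ≤ α * nR ^ 2 := by
        intro q hq
        simp only [Finset.mem_filter] at hq
        have := hq.2
        rw [StronglyAbsorbable] at this
        push_neg at this
        rw [hcard] at this
        exact le_of_lt (by simpa [absCount, hnR] using this)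
      calc (∑ q ∈ (X ×ˢ Y).filter (fun p => ¬ StronglyAbsorbable E α p.1 p.2),
            (absCount E q.1 q.2 : ℝ))
          ≤ ∑ _q ∈ (X ×ˢ Y).filter (fun p => ¬ StronglyAbsorbable E α p.1 p.2), α * nR ^ 2 :=
            Finset.sum_le_sum hle
        _ = (((X ×ˢ Y).filter (fun p => ¬ StronglyAbsorbable E α p.1 p.2)).card : ℝ)
            * (α * nR ^ 2) := by rw [Finset.sum_const, nsmul_eq_mul]
        _ ≤ nR ^ 2 * (α * nR ^ 2) := by
            apply mul_le_mul_of_nonneg_right _ (by positivity)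
            have hc1 : ((X ×ˢ Y).filter (fun p => ¬ StronglyAbsorbable E α p.1 p.2)).card
                ≤ (X ×ˢ Y).card := Finset.card_filter_le _ _
            have hc2 : (X ×ˢ Y).card = X.card * Y.card := Finset.card_product _ _
            have : (((X ×ˢ Y).filter (fun p => ¬ StronglyAbsorbable E α p.1 p.2)).card : ℝ)
                ≤ (X.card : ℝ) * (Y.card : ℝ) := by exact_mod_cast hc1.trans_eq hc2
            have hX0 : (0:ℝ) ≤ (X.card : ℝ) := by positivity
            have hY0 : (0:ℝ) ≤ (Y.card : ℝ) := by positivity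
            nlinarith
    linarith [hTsplit, h1, h2]
  -- combine
  have hfinal : (P.card : ℝ) ≥ (β ^ 4 / 32 - α) * nR ^ 2 := by
    have hβ43 : β ^ 4 ≤ β ^ 3 := pow_le_pow_of_le_one hβ0.le hβ1.le (by norm_num)
    have hgg : β * nR / 4 * (β * nR / 4) * (β * nR ^ 2 / 2)
        ≤ β * nR / 4 * (β * nR / 4) * Good.card := by
      apply mul_le_mul_of_nonneg_left hGoodCard (by positivity)
    have hchain : β ^ 3 * nR ^ 4 / 32 ≤ (P.card : ℝ) * nR ^ 2 + nR ^ 2 * (α * nR ^ 2) := by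
      nlinarith [hgg, hTlow, hTup]
    have hn2 : (0:ℝ) < nR ^ 2 := by positivity
    nlinarith [hchain, hn2, mul_le_mul_of_nonneg_right hβ43 (le_of_lt hn2)]
  rw [hnR] at hfinal
  exact hfinal
end

section
/- Let G be an oriented graph on n vertices satisfying the Ore-degree condition, and suppose uv ∉ E(G) for distinct vertices u, v. If the number of 1-connectors of (u,v) is less than 2^{-24}n, the number of 2-connectors is less than 2^{-24}n², and the number of 3-connectors is less than 2^{-24}n³, then defining N̄⁺⁺(u) = {w ∉ N⁺(u) : |N⁺(u) ∩ N⁻(w)| ≥ 2^{-8}n} and N̄⁻⁻(v) = {w ∉ N⁻(v) : |N⁻(v) ∩ N⁺(w)| ≥ 2^{-8}n}, one has |N̄⁺⁺(u)| + |N̄⁻⁻(v)| > 11n/16 − 9(deg⁺(u) + deg⁻(v))/16. -/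
open Finset

/-- Out-degree of a vertex in a digraph given by an edge relation. -/
def degPlus {V : Type} [Fintype V] (E : V → V → Prop) [DecidableRel E] (x : V) : ℕ :=
  (Finset.univ.filter fun y => E x y).card

/-- In-degree of a vertex in a digraph given by an edge relation. -/
def degMinus {V : Type} [Fintype V] (E : V → V → Prop) [DecidableRel E] (x : V) : ℕ :=
  (Finset.univ.filter fun y => E y x).card

/-- Number of 1-connectors of `(u,v)`: vertices `w` with `uw, wv ∈ E(G)`. -/
def oneConnectors {V : Type} [Fintype V] [DecidableEq V] (E : V → V → Prop) [DecidableRel E]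
    (u v : V) : ℕ :=
  (Finset.univ.filter fun w : V => w ≠ u ∧ w ≠ v ∧ E u w ∧ E w v).card

/-- Number of 2-connectors of `(u,v)`: directed paths `w₁w₂` with `uw₁, w₂v ∈ E(G)`. -/
def twoConnectors {V : Type} [Fintype V] [DecidableEq V] (E : V → V → Prop) [DecidableRel E]
    (u v : V) : ℕ :=
  ((Finset.univ ×ˢ Finset.univ : Finset (V × V)).filter fun p =>
    p.1 ≠ p.2 ∧ p.1 ≠ u ∧ p.1 ≠ v ∧ p.2 ≠ u ∧ p.2 ≠ v ∧
      E u p.1 ∧ E p.1 p.2 ∧ E p.2 v).card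

/-- Number of 3-connectors of `(u,v)`: directed paths `w₁w₂w₃` with `uw₁, w₃v ∈ E(G)`. -/
def threeConnectors {V : Type} [Fintype V] [DecidableEq V] (E : V → V → Prop) [DecidableRel E]
    (u v : V) : ℕ :=
  ((Finset.univ ×ˢ Finset.univ ×ˢ Finset.univ : Finset (V × V × V)).filter fun p =>
    p.1 ≠ p.2.1 ∧ p.1 ≠ p.2.2 ∧ p.2.1 ≠ p.2.2 ∧
    p.1 ≠ u ∧ p.1 ≠ v ∧ p.2.1 ≠ u ∧ p.2.1 ≠ v ∧ p.2.2 ≠ u ∧ p.2.2 ≠ v ∧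
      E u p.1 ∧ E p.1 p.2.1 ∧ E p.2.1 p.2.2 ∧ E p.2.2 v).card

/-!
Write `S = N⁺(u)`, `T = N⁻(v)`, `A = N̄⁺⁺(u)`, `p = |S|`, `m = |T|`, `Q = (3n - 3)/4`. A vertex `y`
receives `|S ∩ N⁻(y)|` arcs from `S`: at most `p` for `y ∈ A`, a 2-connector count over `y ∈ T`,
and fewer than `n/256` for `y ∉ S ∪ A ∪ T ∪ {u, v}`. Comparing this upper bound on
`∑_{x ∈ S} d⁺(x)` with Ore's condition for the pairs `(x, v)`, `x ∈ S \ T`, gives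
`|A| ≥ Q - m - (p - 1)/2 - n/32`. Ore's condition for the non-adjacent pairs of
`(S \ T) × (T \ S)`, together with the analogous bound on `∑_{y ∈ T} d⁻(y)` (where arcs from `A`
into `T` are paid for by 3-connectors), gives `|A| ≥ (p + m)/2 - (n - 9)/4 - n/32`. The same
bounds hold for `N̄⁻⁻(v)` in the reversed graph, and `5/8` times the first pair plus `3/8` times
the second pair is the claim. The connector terms are negligible because Ore's condition forces
`p, m ≥ (n - 3)/8`, and they vanish for `n < 256`.
-/

instance instDecidableRelFlip {α : Type*} (r : α → α → Prop) [DecidableRel r] :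
    DecidableRel (flip r) :=
  fun a b => inferInstanceAs (Decidable (r b a))

theorem Finset.sum_union_le {ι : Type*} [DecidableEq ι] (s t : Finset ι) (f : ι → ℕ) :
    ∑ i ∈ s ∪ t, f i ≤ ∑ i ∈ s, f i + ∑ i ∈ t, f i := by
  rw [← sum_union_inter]
  exact le_self_add

theorem eq_zero_of_cast_lt_two_zpow_mul_pow {k N j : ℕ} (hj : j ≤ 3) (hN : N < 256)
    (h : (k : ℝ) < 2 ^ (-24 : ℤ) * N ^ j) : k = 0 := by
  have hN' : (N : ℝ) ^ j ≤ 2 ^ 24 :=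
    calc (N : ℝ) ^ j ≤ 256 ^ j := by gcongr; exact_mod_cast hN.le
      _ ≤ 256 ^ 3 := pow_le_pow_right₀ (by norm_num) hj
      _ = 2 ^ 24 := by norm_num
  have : (k : ℝ) < 1 :=
    calc (k : ℝ) < 2 ^ (-24 : ℤ) * N ^ j := h
      _ ≤ 2 ^ (-24 : ℤ) * 2 ^ 24 := by gcongr
      _ = 1 := by norm_num
  exact_mod_cast Nat.lt_one_iff.1 (by exact_mod_cast this)

theorem lt_of_lt_two_zpow_neg_24_mul {x y : ℝ} (h : x < 2 ^ (-24 : ℤ) * y) : x < y / 2 ^ 24 := by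
  rw [show (2 : ℝ) ^ (-24 : ℤ) = 1 / 2 ^ 24 by norm_num] at h
  linarith

section Digraph

variable {V : Type} {E : V → V → Prop}

theorem Oriented.ne (hor : Oriented E) {x y : V} (h : E x y) : x ≠ y := by
  rintro rfl
  exact hor.1 x h

theorem Oriented.flip (hor : Oriented E) : Oriented (flip E) :=
  ⟨hor.1, fun x y h => hor.2 y x h⟩

variable [DecidableRel E]

def arcs (E : V → V → Prop) [DecidableRel E] (X Y : Finset V) : Finset (V × V) :=
  (X ×ˢ Y).filter fun p => E p.1 p.2

@[simp] theorem mem_arcs {X Y : Finset V} {p : V × V} :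
    p ∈ arcs E X Y ↔ p.1 ∈ X ∧ p.2 ∈ Y ∧ E p.1 p.2 := by
  simp [arcs, and_assoc]

theorem card_arcs_eq_sum_left (X Y : Finset V) :
    #(arcs E X Y) = ∑ x ∈ X, #(Y.filter (E x ·)) := by
  rw [arcs, card_filter, sum_product]
  simp only [card_filter]

theorem card_arcs_eq_sum_right (X Y : Finset V) :
    #(arcs E X Y) = ∑ y ∈ Y, #(X.filter (E · y)) := by
  rw [card_arcs_eq_sum_left]
  simp only [card_filter]
  exact sum_comm

theorem card_arcs_flip (X Y : Finset V) : #(arcs (flip E) Y X) = #(arcs E X Y) := by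
  rw [card_arcs_eq_sum_left, card_arcs_eq_sum_right]
  rfl

theorem Oriented.two_mul_card_arcs_add_card_le [DecidableEq V] (hor : Oriented E) (F : Finset V) :
    2 * #(arcs E F F) + #F ≤ #F * #F := by
  have hdisj : Disjoint (arcs E F F) ((arcs E F F).map (Equiv.prodComm V V).toEmbedding) := by
    rw [disjoint_left]
    intro p hp hp'
    obtain ⟨q, hq, rfl⟩ := mem_map.1 hp'
    exact hor.2 _ _ (mem_arcs.1 hq).2.2 (mem_arcs.1 hp).2.2
  have hsub : arcs E F F ∪ (arcs E F F).map (Equiv.prodComm V V).toEmbedding ⊆ F.offDiag := by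
    intro p hp
    rcases mem_union.1 hp with hp | hp
    · obtain ⟨h1, h2, h⟩ := mem_arcs.1 hp
      exact mem_offDiag.2 ⟨h1, h2, hor.ne h⟩
    · obtain ⟨q, hq, rfl⟩ := mem_map.1 hp
      obtain ⟨h1, h2, h⟩ := mem_arcs.1 hq
      exact mem_offDiag.2 ⟨h2, h1, (hor.ne h).symm⟩
  have := card_le_card hsub
  rw [card_union_of_disjoint hdisj, card_map, offDiag_card] at this
  have : #F ≤ #F * #F := Nat.le_mul_self _
  omega

variable [Fintype V]

def outNbhd (E : V → V → Prop) [DecidableRel E] (u : V) : Finset V := univ.filter (E u ·)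

def inNbhd (E : V → V → Prop) [DecidableRel E] (v : V) : Finset V := univ.filter (E · v)

-- The paper's `N̄⁺⁺(u)`.
noncomputable def secondOutNbhd (E : V → V → Prop) [DecidableRel E] (u : V) : Finset V :=
  univ.filter fun w => ¬ E u w ∧ (Fintype.card V : ℝ) / 256 ≤ #((outNbhd E u).filter (E · w))

def OreCondition (E : V → V → Prop) [DecidableRel E] : Prop :=
  ∀ x y : V, x ≠ y → ¬ E x y →
    ((degPlus E x : ℝ) + (degMinus E y : ℝ)) ≥ (3 * Fintype.card V - 3) / 4

@[simp] theorem mem_outNbhd {u w : V} : w ∈ outNbhd E u ↔ E u w := by simp [outNbhd]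

@[simp] theorem mem_inNbhd {v w : V} : w ∈ inNbhd E v ↔ E w v := by simp [inNbhd]

theorem mem_secondOutNbhd {u w : V} :
    w ∈ secondOutNbhd E u ↔
      ¬ E u w ∧ (Fintype.card V : ℝ) / 256 ≤ #((outNbhd E u).filter (E · w)) := by
  simp [secondOutNbhd]

theorem card_outNbhd (u : V) : #(outNbhd E u) = degPlus E u := rfl

theorem card_inNbhd (v : V) : #(inNbhd E v) = degMinus E v := rfl

theorem degPlus_flip (x : V) : degPlus (flip E) x = degMinus E x := rfl

theorem degMinus_flip (x : V) : degMinus (flip E) x = degPlus E x := rfl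

theorem OreCondition.flip (hOre : OreCondition E) : OreCondition (flip E) :=
  fun x y hxy h => (add_comm _ _).trans_ge (hOre y x hxy.symm h)

theorem sum_degPlus_eq (X : Finset V) : ∑ x ∈ X, degPlus E x = ∑ y, #(X.filter (E · y)) := by
  rw [← card_arcs_eq_sum_right]
  exact (card_arcs_eq_sum_left X univ).symm

theorem sum_degMinus_eq (Y : Finset V) : ∑ y ∈ Y, degMinus E y = ∑ x, #(Y.filter (E x ·)) := by
  rw [← card_arcs_eq_sum_left]
  exact (card_arcs_eq_sum_right univ Y).symm

theorem Oriented.two_mul_sum_degMinus_add_card_le [DecidableEq V] (hor : Oriented E) :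
    2 * ∑ y, degMinus E y + Fintype.card V ≤ Fintype.card V * Fintype.card V := by
  have := hor.two_mul_card_arcs_add_card_le univ
  rwa [card_arcs_eq_sum_left, ← sum_degMinus_eq, card_univ] at this

-- The `n - 1 - d⁺(u)` non-out-neighbours `y ≠ u` have `d⁻(y) ≥ 3(n-1)/4 - d⁺(u)`, while the
-- in-degrees sum to at most `n(n-1)/2`.
theorem OreCondition.degPlus_ge [DecidableEq V] (hor : Oriented E) (hOre : OreCondition E)
    (u : V) : ((Fintype.card V : ℝ) - 3) / 8 ≤ degPlus E u := by
  set n := Fintype.card V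
  set p := degPlus E u
  set K := (univ.filter (¬ E u ·)).erase u
  have hK : #K + p + 1 = n := by
    have h := card_filter_add_card_filter_not (s := univ) (E u ·)
    have hu : u ∈ univ.filter (¬ E u ·) := by simpa using hor.1 u
    have := card_pos.2 ⟨u, hu⟩
    rw [card_erase_of_mem hu]
    simp only [p, n, degPlus, card_univ] at h ⊢
    omega
  have hKR : (#K : ℝ) = n - 1 - p := by
    have := congrArg (Nat.cast (R := ℝ)) hK
    push_cast at this
    linarith
  have hlow : ∀ y ∈ K, (3 * (n : ℝ) - 3) / 4 - p ≤ degMinus E y := by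
    intro y hy
    obtain ⟨hyu, hy⟩ := mem_erase.1 hy
    have := hOre u y hyu.symm (by simpa using hy)
    linarith
  have hsum := card_nsmul_le_sum K _ _ hlow
  rw [nsmul_eq_mul, hKR] at hsum
  have htot : (∑ y ∈ K, degMinus E y : ℝ) ≤ ((n : ℝ) * n - n) / 2 := by
    have h1 : ∑ y ∈ K, degMinus E y ≤ ∑ y, degMinus E y := sum_le_sum_of_subset (subset_univ K)
    have h2 : 2 * ∑ y, degMinus E y + n ≤ n * n := hor.two_mul_sum_degMinus_add_card_le
    have : 2 * ∑ y ∈ K, (degMinus E y : ℝ) + n ≤ n * n := by exact_mod_cast (by omega)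
    linarith
  by_contra! hp
  have hp0 : (0 : ℝ) ≤ p := Nat.cast_nonneg _
  nlinarith

theorem OreCondition.degPlus_pos [DecidableEq V] (hor : Oriented E) (hOre : OreCondition E)
    (hn : 3 < Fintype.card V) (u : V) : 0 < degPlus E u := by
  have := hOre.degPlus_ge hor u
  have : (3 : ℝ) < Fintype.card V := by exact_mod_cast hn
  exact_mod_cast (show (0 : ℝ) < degPlus E u by linarith)

end Digraph

section Connectors

variable {V : Type} [Fintype V] [DecidableEq V] {E : V → V → Prop} [DecidableRel E] {u v : V}

theorem oneConnectors_eq (hor : Oriented E) :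
    oneConnectors E u v = #(outNbhd E u ∩ inNbhd E v) := by
  unfold oneConnectors
  congr 1
  ext w
  simp only [mem_filter, mem_univ, true_and, mem_inter, mem_outNbhd, mem_inNbhd]
  exact ⟨fun h => h.2.2, fun h => ⟨(hor.ne h.1).symm, hor.ne h.2, h⟩⟩

theorem twoConnectors_eq (hor : Oriented E) (hne : ¬ E u v) :
    twoConnectors E u v = #(arcs E (outNbhd E u) (inNbhd E v)) := by
  unfold twoConnectors
  congr 1
  ext ⟨x, y⟩
  simp only [mem_filter, mem_product, mem_univ, true_and, mem_arcs, mem_outNbhd, mem_inNbhd]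
  refine ⟨fun h => ⟨h.2.2.2.2.2.1, h.2.2.2.2.2.2.2, h.2.2.2.2.2.2.1⟩, fun ⟨hx, hy, hxy⟩ => ?_⟩
  refine ⟨hor.ne hxy, (hor.ne hx).symm, ?_, ?_, hor.ne hy, hx, hxy, hy⟩
  · rintro rfl; exact hne hx
  · rintro rfl; exact hne hy

-- Since `G` is oriented and `uv ∉ E(G)`, every walk `u → x → y → z → v` is a 3-connector;
-- count them by the middle vertex `y`.
theorem threeConnectors_eq (hor : Oriented E) (hne : ¬ E u v) :
    threeConnectors E u v =
      ∑ y, #((outNbhd E u).filter (E · y)) * #((inNbhd E v).filter (E y ·)) := by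
  rw [threeConnectors, card_eq_sum_card_fiberwise (f := fun q => q.2.1) (t := univ)
    (fun _ _ => mem_coe.2 (mem_univ _))]
  refine sum_congr rfl fun y _ => ?_
  rw [← card_product]
  refine card_nbij' (fun q => (q.1, q.2.2)) (fun p => (p.1, y, p.2)) ?_ ?_ ?_ ?_
  · intro q hq
    simp only [mem_coe, mem_filter] at hq
    obtain ⟨⟨-, -, -, -, -, -, -, -, -, -, hx, hxy, hyz, hz⟩, rfl⟩ := hq
    simp [hx, hxy, hyz, hz]
  · rintro ⟨x, z⟩ h
    simp only [mem_coe, mem_product, mem_filter, mem_outNbhd, mem_inNbhd] at h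
    obtain ⟨⟨hx, hxy⟩, hz, hyz⟩ := h
    simp only [mem_coe, mem_filter, mem_product, mem_univ, true_and, and_true]
    refine ⟨hor.ne hxy, ?_, hor.ne hyz, (hor.ne hx).symm, ?_, ?_, ?_, ?_, hor.ne hz,
      hx, hxy, hyz, hz⟩
    · rintro rfl; exact hor.2 _ _ hxy hyz
    · rintro rfl; exact hne hx
    · rintro rfl; exact hor.2 _ _ hx hxy
    · rintro rfl; exact hor.2 _ _ hyz hz
    · rintro rfl; exact hne hz
  · intro q hq
    obtain ⟨-, rfl⟩ := mem_filter.1 (mem_coe.1 hq)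
    rfl
  · intro p _
    rfl

theorem oneConnectors_flip (hor : Oriented E) :
    oneConnectors (flip E) v u = oneConnectors E u v := by
  rw [oneConnectors_eq hor.flip, oneConnectors_eq hor, inter_comm]
  rfl

theorem twoConnectors_flip (hor : Oriented E) (hne : ¬ E u v) :
    twoConnectors (flip E) v u = twoConnectors E u v := by
  rw [twoConnectors_eq hor.flip hne, twoConnectors_eq hor hne, ← card_arcs_flip]
  rfl

theorem threeConnectors_flip (hor : Oriented E) (hne : ¬ E u v) :
    threeConnectors (flip E) v u = threeConnectors E u v := by
  rw [threeConnectors_eq hor.flip hne, threeConnectors_eq hor hne]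
  exact sum_congr rfl fun _ _ => mul_comm _ _

end Connectors

-- Error terms of the two counting arguments below: `c`, `c2` stand for the numbers of 1- and
-- 2-connectors, `X2` for the number of arcs from `N̄⁺⁺(u)` into `N⁻(v)`, `r` for the number of
-- remote vertices and `SR` for the number of arcs from `N⁺(u)` to them. For `n < 256` these are
-- natural numbers below `1`; otherwise they are small against `p, m ≥ (n - 3)/8`.
theorem sum_degPlus_error_le {n p m c c2 SR r : ℝ} (hp : (n - 3) / 8 ≤ p) (hm : 0 ≤ m) (hc0 : 0 ≤ c)
    (hc : c ≤ n / 2 ^ 24) (hc2 : c2 ≤ n ^ 2 / 2 ^ 24) (hSR : SR ≤ r * (n / 256)) (hr0 : 0 ≤ r)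
    (hr : r + p + m + 2 ≤ n + c) (hQ : (3 * n - 3) / 4 ≤ p + m)
    (hsmall : n < 256 → c = 0 ∧ c2 = 0 ∧ SR = 0) :
    c2 + c + SR + c * ((3 * n - 3) / 4 - m) ≤ n / 32 * p := by
  rcases lt_or_ge n 256 with hn | hn
  · obtain ⟨rfl, rfl, rfl⟩ := hsmall hn
    simp only [add_zero, zero_mul]
    exact mul_nonneg (by linarith) (by linarith)
  have h1 : SR ≤ n / 3 * (n / 256) := hSR.trans (by gcongr; linarith)
  have h2 : c * ((3 * n - 3) / 4 - m) ≤ n / 2 ^ 24 * n :=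
    calc _ ≤ c * n := by gcongr; linarith
      _ ≤ _ := by gcongr
  nlinarith

theorem ore_pairs_error_le {n p m c c2 X2 SR r : ℝ} (hp : (n - 3) / 8 ≤ p) (hm : (n - 3) / 8 ≤ m)
    (hc0 : 0 ≤ c) (hc : c ≤ n / 2 ^ 24) (hc2 : c2 ≤ n ^ 2 / 2 ^ 24) (hX2 : X2 ≤ n ^ 2 / 2 ^ 16)
    (hSR : SR ≤ r * (n / 256)) (hr0 : 0 ≤ r) (hr : r + p + m + 2 ≤ n + c)
    (hQ : (3 * n - 3) / 4 ≤ p + m) (hsmall : n < 256 → c = 0 ∧ c2 = 0 ∧ X2 = 0 ∧ SR = 0) :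
    m * (c2 + c + SR) + p * (c2 + X2 + c + c * m) + (c * (p + m) + c2) * ((3 * n - 3) / 4)
      ≤ n / 32 * (p * m) := by
  rcases lt_or_ge n 256 with hn | hn
  · obtain ⟨rfl, rfl, rfl, rfl⟩ := hsmall hn
    simp only [add_zero, zero_mul, mul_zero]
    exact mul_nonneg (by linarith) (mul_nonneg (by linarith) (by linarith))
  replace hp : n ≤ 9 * p := by linarith
  replace hm : n ≤ 9 * m := by linarith
  have hp0 : 0 ≤ p := by linarith
  have hm0 : 0 ≤ m := by linarith
  have hpn : p ≤ n := by linarith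
  have hmn : m ≤ n := by linarith
  have h1 : c2 + c + SR ≤ n ^ 2 / 700 := by
    have : SR ≤ n / 3 * (n / 256) := hSR.trans (by gcongr; linarith)
    nlinarith
  have h2 : c2 + X2 + c + c * m ≤ n ^ 2 / 2 ^ 15 := by
    have : c * m ≤ n / 2 ^ 24 * n := mul_le_mul hc hmn hm0 (by positivity)
    nlinarith
  have h3 : (c * (p + m) + c2) * ((3 * n - 3) / 4) ≤ n ^ 3 / 2 ^ 22 := by
    have : c * (p + m) ≤ n / 2 ^ 24 * (2 * n) :=
      mul_le_mul hc (by linarith) (by linarith) (by positivity)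
    calc _ ≤ n ^ 2 / 2 ^ 22 * n := by gcongr <;> nlinarith
      _ = _ := by ring
  have k1 : m * (c2 + c + SR) ≤ m * (9 * p * n / 700) := by gcongr; nlinarith
  have k2 : p * (c2 + X2 + c + c * m) ≤ p * (9 * m * n / 2 ^ 15) := by gcongr; nlinarith
  have k3 : n ^ 3 / 2 ^ 22 ≤ 81 * p * m * n / 2 ^ 22 := by
    have : n * n ≤ (9 * p) * (9 * m) := mul_le_mul hp hm (by linarith) (by linarith)
    nlinarith
  nlinarith

section SecondOutNbhd

variable {V : Type} [Fintype V] [DecidableEq V] {E : V → V → Prop} [DecidableRel E] {u v : V}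

theorem card_outNbhd_sdiff_inNbhd_add (hor : Oriented E) :
    #(outNbhd E u \ inNbhd E v) + oneConnectors E u v = degPlus E u := by
  rw [oneConnectors_eq hor]
  exact card_sdiff_add_card_inter _ _

theorem card_inNbhd_sdiff_outNbhd_add (hor : Oriented E) :
    #(inNbhd E v \ outNbhd E u) + oneConnectors E u v = degMinus E v := by
  rw [oneConnectors_eq hor, inter_comm]
  exact card_sdiff_add_card_inter _ _

noncomputable def remote (E : V → V → Prop) [DecidableRel E] (u v : V) : Finset V :=
  univ \ (outNbhd E u ∪ secondOutNbhd E u ∪ inNbhd E v ∪ {u, v})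

theorem card_remote_add_le (hor : Oriented E) (huv : u ≠ v) (hne : ¬ E u v) :
    #(remote E u v) + degPlus E u + degMinus E v + 2 ≤ Fintype.card V + oneConnectors E u v := by
  have hST : Disjoint (outNbhd E u ∪ inNbhd E v) {u, v} := by
    simp [hor.1 u, hor.1 v, hne]
  have hR : Disjoint (remote E u v) (outNbhd E u ∪ inNbhd E v ∪ {u, v}) := by
    rw [disjoint_left]
    intro w hw
    simp only [remote, mem_sdiff, mem_union] at hw ⊢
    tauto
  have h := card_le_univ (remote E u v ∪ (outNbhd E u ∪ inNbhd E v ∪ {u, v}))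
  rw [card_union_of_disjoint hR, card_union_of_disjoint hST, card_pair huv] at h
  have := card_union_add_card_inter (outNbhd E u) (inNbhd E v)
  rw [oneConnectors_eq hor, ← card_outNbhd, ← card_inNbhd]
  omega

theorem card_filter_lt_of_mem_remote {y : V} (hy : y ∈ remote E u v) :
    (#((outNbhd E u).filter (E · y)) : ℝ) < Fintype.card V / 256 := by
  simp only [remote, mem_sdiff, mem_union, mem_univ, true_and, not_or] at hy
  obtain ⟨⟨⟨hyS, hyA⟩, -⟩, -⟩ := hy
  rw [mem_secondOutNbhd, not_and, not_le] at hyA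
  exact hyA (mem_outNbhd.not.1 hyS)

theorem sum_le_sum_cover (huv : u ≠ v) (h : V → ℕ) :
    ∑ y, h y ≤ ∑ y ∈ outNbhd E u, h y + ∑ y ∈ secondOutNbhd E u, h y + ∑ y ∈ inNbhd E v, h y
      + (h u + h v) + ∑ y ∈ remote E u v, h y := by
  have hcover : univ = outNbhd E u ∪ secondOutNbhd E u ∪ inNbhd E v ∪ {u, v} ∪ remote E u v :=
    (union_sdiff_of_subset (subset_univ _)).symm
  rw [hcover]
  have h1 := sum_union_le (outNbhd E u ∪ secondOutNbhd E u ∪ inNbhd E v ∪ {u, v}) (remote E u v) h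
  have h2 := sum_union_le (outNbhd E u ∪ secondOutNbhd E u ∪ inNbhd E v) {u, v} h
  have h3 := sum_union_le (outNbhd E u ∪ secondOutNbhd E u) (inNbhd E v) h
  have h4 := sum_union_le (outNbhd E u) (secondOutNbhd E u) h
  rw [sum_pair huv] at h2
  omega

theorem sum_degPlus_outNbhd_le (hor : Oriented E) (huv : u ≠ v) (hne : ¬ E u v) :
    ∑ x ∈ outNbhd E u, degPlus E x ≤
      #(arcs E (outNbhd E u) (outNbhd E u)) + #(secondOutNbhd E u) * degPlus E u
        + twoConnectors E u v + oneConnectors E u v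
        + ∑ y ∈ remote E u v, #((outNbhd E u).filter (E · y)) := by
  rw [sum_degPlus_eq (E := E)]
  refine (sum_le_sum_cover (E := E) huv _).trans ?_
  have hA : ∑ y ∈ secondOutNbhd E u, #((outNbhd E u).filter (E · y))
      ≤ #(secondOutNbhd E u) * degPlus E u := by
    rw [← smul_eq_mul]
    exact sum_le_card_nsmul _ _ _ fun y _ => card_filter_le _ _
  have hu : #((outNbhd E u).filter (E · u)) = 0 := by
    rw [card_eq_zero, filter_eq_empty_iff]
    exact fun x hx hxu => hor.2 _ _ (mem_outNbhd.1 hx) hxu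
  have hv : #((outNbhd E u).filter (E · v)) = oneConnectors E u v := by
    rw [oneConnectors_eq hor]
    congr 1
    ext w
    simp
  have hT : ∑ y ∈ inNbhd E v, #((outNbhd E u).filter (E · y)) = twoConnectors E u v := by
    rw [twoConnectors_eq hor hne, card_arcs_eq_sum_right]
  rw [← card_arcs_eq_sum_right (outNbhd E u) (outNbhd E u), hT, hu, hv]
  omega

theorem sum_degMinus_inNbhd_le (hor : Oriented E) (huv : u ≠ v) (hne : ¬ E u v) :
    ∑ y ∈ inNbhd E v, degMinus E y ≤
      twoConnectors E u v + #(arcs E (secondOutNbhd E u) (inNbhd E v))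
        + #(arcs E (inNbhd E v) (inNbhd E v)) + oneConnectors E u v
        + #(remote E u v) * degMinus E v := by
  rw [sum_degMinus_eq (E := E)]
  refine (sum_le_sum_cover (E := E) huv _).trans ?_
  have hR : ∑ x ∈ remote E u v, #((inNbhd E v).filter (E x ·))
      ≤ #(remote E u v) * degMinus E v := by
    rw [← smul_eq_mul]
    exact sum_le_card_nsmul _ _ _ fun y _ => card_filter_le _ _
  have hu : #((inNbhd E v).filter (E u ·)) = oneConnectors E u v := by
    rw [oneConnectors_eq hor]
    congr 1
    ext w
    simp [and_comm]
  have hv : #((inNbhd E v).filter (E v ·)) = 0 := by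
    rw [card_eq_zero, filter_eq_empty_iff]
    exact fun y hy hvy => hor.2 _ _ (mem_inNbhd.1 hy) hvy
  rw [← card_arcs_eq_sum_left (outNbhd E u), ← card_arcs_eq_sum_left (secondOutNbhd E u),
    ← card_arcs_eq_sum_left (inNbhd E v), ← twoConnectors_eq hor hne, hu, hv]
  omega

-- Each arc `y → z` from `N̄⁺⁺(u)` into `N⁻(v)` extends backwards to at least `n/256`
-- 3-connectors `u → x → y → z → v`.
theorem card_arcs_secondOutNbhd_le (hor : Oriented E) (hne : ¬ E u v) :
    (Fintype.card V : ℝ) / 256 * #(arcs E (secondOutNbhd E u) (inNbhd E v))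
      ≤ threeConnectors E u v := by
  rw [card_arcs_eq_sum_left, threeConnectors_eq hor hne]
  push_cast
  rw [mul_sum]
  calc ∑ y ∈ secondOutNbhd E u, (Fintype.card V : ℝ) / 256 * #((inNbhd E v).filter (E y ·))
      ≤ ∑ y ∈ secondOutNbhd E u,
          (#((outNbhd E u).filter (E · y)) : ℝ) * #((inNbhd E v).filter (E y ·)) :=
        sum_le_sum fun y hy => by gcongr; exact (mem_secondOutNbhd.1 hy).2
    _ ≤ _ := sum_le_sum_of_subset_of_nonneg (subset_univ _) fun _ _ _ => by positivity

theorem sum_degPlus_outNbhd_ge (hor : Oriented E) (hOre : OreCondition E) (hne : ¬ E u v) :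
    ((degPlus E u : ℝ) - oneConnectors E u v) * ((3 * Fintype.card V - 3) / 4 - degMinus E v)
      ≤ ∑ x ∈ outNbhd E u, (degPlus E x : ℝ) := by
  rw [← card_outNbhd_sdiff_inNbhd_add (v := v) hor, Nat.cast_add, add_sub_cancel_right]
  calc _ ≤ ∑ x ∈ outNbhd E u \ inNbhd E v, (degPlus E x : ℝ) := by
        rw [← nsmul_eq_mul]
        refine card_nsmul_le_sum _ _ _ fun x hx => ?_
        obtain ⟨hxS, hxT⟩ := mem_sdiff.1 hx
        have hxv : x ≠ v := by rintro rfl; exact hne (mem_outNbhd.1 hxS)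
        have := hOre x v hxv (fun h => hxT (mem_inNbhd.2 h))
        linarith
    _ ≤ _ := sum_le_sum_of_subset_of_nonneg sdiff_subset fun _ _ _ => by positivity

-- Ore's condition summed over the non-adjacent pairs of `(N⁺(u) \ N⁻(v)) × (N⁻(v) \ N⁺(u))`;
-- the adjacent pairs are 2-connectors.
theorem ore_sum_le_sum_degPlus_add_sum_degMinus (hor : Oriented E) (hOre : OreCondition E)
    (hne : ¬ E u v) :
    (((degPlus E u : ℝ) - oneConnectors E u v) * (degMinus E v - oneConnectors E u v)
        - twoConnectors E u v) * ((3 * Fintype.card V - 3) / 4)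
      ≤ (degMinus E v - oneConnectors E u v) * ∑ x ∈ outNbhd E u, (degPlus E x : ℝ)
        + (degPlus E u - oneConnectors E u v) * ∑ y ∈ inNbhd E v, (degMinus E y : ℝ) := by
  rw [← card_outNbhd_sdiff_inNbhd_add (v := v) hor, ← card_inNbhd_sdiff_outNbhd_add (u := u) hor]
  simp only [Nat.cast_add, add_sub_cancel_right]
  set X := outNbhd E u \ inNbhd E v
  set Y := inNbhd E v \ outNbhd E u
  set P := (X ×ˢ Y).filter fun p => ¬ E p.1 p.2
  have hP : (#X * #Y : ℝ) - twoConnectors E u v ≤ #P := by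
    have hsplit : #(arcs E X Y) + #P = #X * #Y := by
      rw [arcs, card_filter_add_card_filter_not, card_product]
    have hsub : #(arcs E X Y) ≤ twoConnectors E u v := by
      rw [twoConnectors_eq hor hne]
      refine card_le_card fun p hp => ?_
      simp only [mem_arcs, X, Y, mem_sdiff] at hp ⊢
      exact ⟨hp.1.1, hp.2.1.1, hp.2.2⟩
    have : (#(arcs E X Y) + #P : ℝ) = #X * #Y := by exact_mod_cast hsplit
    have : (#(arcs E X Y) : ℝ) ≤ twoConnectors E u v := by exact_mod_cast hsub
    linarith
  have hQ : (0 : ℝ) ≤ (3 * Fintype.card V - 3) / 4 := by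
    have : (1 : ℝ) ≤ Fintype.card V := by exact_mod_cast Fintype.card_pos_iff.2 ⟨u⟩
    linarith
  have hOreP : ∀ p ∈ P, (3 * (Fintype.card V : ℝ) - 3) / 4 ≤ degPlus E p.1 + degMinus E p.2 := by
    intro p hp
    simp only [P, mem_filter, mem_product, X, Y, mem_sdiff] at hp
    exact hOre p.1 p.2 (fun h => hp.1.2.2 (h ▸ hp.1.1.1)) hp.2
  calc _ ≤ (#P : ℝ) * ((3 * Fintype.card V - 3) / 4) := mul_le_mul_of_nonneg_right hP hQ
    _ ≤ ∑ p ∈ P, ((degPlus E p.1 : ℝ) + degMinus E p.2) := by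
        rw [← nsmul_eq_mul]
        exact card_nsmul_le_sum _ _ _ hOreP
    _ ≤ ∑ p ∈ X ×ˢ Y, ((degPlus E p.1 : ℝ) + degMinus E p.2) :=
        sum_le_sum_of_subset_of_nonneg (filter_subset _ _) fun _ _ _ => by positivity
    _ = #Y * ∑ x ∈ X, (degPlus E x : ℝ) + #X * ∑ y ∈ Y, (degMinus E y : ℝ) := by
        simp only [sum_product, sum_add_distrib, sum_const, nsmul_eq_mul, mul_sum]
    _ ≤ _ := by
        gcongr <;> exact sdiff_subset

theorem sum_remote_le :
    ∑ y ∈ remote E u v, (#((outNbhd E u).filter (E · y)) : ℝ)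
      ≤ #(remote E u v) * (Fintype.card V / 256) := by
  rw [← nsmul_eq_mul]
  exact sum_le_card_nsmul _ _ _ fun y hy => (card_filter_lt_of_mem_remote hy).le

theorem sum_remote_eq_zero (hn : Fintype.card V ≤ 256) :
    ∑ y ∈ remote E u v, #((outNbhd E u).filter (E · y)) = 0 := by
  refine sum_eq_zero fun y hy => ?_
  have h := card_filter_lt_of_mem_remote hy
  have : (Fintype.card V : ℝ) ≤ 256 := by exact_mod_cast hn
  have : (#((outNbhd E u).filter (E · y)) : ℝ) < 1 := by linarith
  exact_mod_cast Nat.lt_one_iff.1 (by exact_mod_cast this)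

theorem three_lt_card (hor : Oriented E) (hOre : OreCondition E) (huv : u ≠ v) (hne : ¬ E u v)
    (h1 : (oneConnectors E u v : ℝ) < 2 ^ (-24 : ℤ) * Fintype.card V) :
    3 < Fintype.card V := by
  have hr := (Nat.cast_le (α := ℝ)).2 (card_remote_add_le hor huv hne)
  push_cast at hr
  have := hOre u v huv hne
  have := lt_of_lt_two_zpow_neg_24_mul h1
  have : (0 : ℝ) ≤ #(remote E u v) := Nat.cast_nonneg _
  exact_mod_cast (show (3 : ℝ) < Fintype.card V by linarith)

theorem connectors_eq_zero_of_card_lt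
    (h1 : (oneConnectors E u v : ℝ) < 2 ^ (-24 : ℤ) * Fintype.card V)
    (h2 : (twoConnectors E u v : ℝ) < 2 ^ (-24 : ℤ) * (Fintype.card V : ℝ) ^ 2)
    (hn : (Fintype.card V : ℝ) < 256) :
    (oneConnectors E u v : ℝ) = 0 ∧ (twoConnectors E u v : ℝ) = 0 ∧
      ∑ y ∈ remote E u v, (#((outNbhd E u).filter (E · y)) : ℝ) = 0 := by
  have hn : Fintype.card V < 256 := by exact_mod_cast hn
  refine ⟨?_, ?_, by exact_mod_cast sum_remote_eq_zero hn.le⟩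
  · simp [eq_zero_of_cast_lt_two_zpow_mul_pow (j := 1) (by norm_num) hn (by simpa using h1)]
  · simp [eq_zero_of_cast_lt_two_zpow_mul_pow (j := 2) (by norm_num) hn h2]

theorem card_arcs_secondOutNbhd_lt (hor : Oriented E) (hne : ¬ E u v)
    (h3 : (threeConnectors E u v : ℝ) < 2 ^ (-24 : ℤ) * (Fintype.card V : ℝ) ^ 3) :
    (#(arcs E (secondOutNbhd E u) (inNbhd E v)) : ℝ) < (Fintype.card V : ℝ) ^ 2 / 2 ^ 16 := by
  have hn : (0 : ℝ) < Fintype.card V := by exact_mod_cast Fintype.card_pos_iff.2 ⟨u⟩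
  refine lt_of_mul_lt_mul_left ?_ (by positivity : (0 : ℝ) ≤ Fintype.card V / 256)
  calc _ ≤ (threeConnectors E u v : ℝ) := card_arcs_secondOutNbhd_le hor hne
    _ < _ := lt_of_lt_two_zpow_neg_24_mul h3
    _ = _ := by ring

theorem card_arcs_secondOutNbhd_eq_zero (hor : Oriented E) (hne : ¬ E u v)
    (h3 : (threeConnectors E u v : ℝ) < 2 ^ (-24 : ℤ) * (Fintype.card V : ℝ) ^ 3)
    (hn : (Fintype.card V : ℝ) < 256) :
    (#(arcs E (secondOutNbhd E u) (inNbhd E v)) : ℝ) = 0 := by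
  have : (#(arcs E (secondOutNbhd E u) (inNbhd E v)) : ℝ) < 1 := by
    refine (card_arcs_secondOutNbhd_lt hor hne h3).trans_le ?_
    have : (0 : ℝ) ≤ Fintype.card V := Nat.cast_nonneg _
    nlinarith
  simp [Nat.lt_one_iff.1 (by exact_mod_cast this)]

theorem card_secondOutNbhd_ge_of_sum_degPlus (hor : Oriented E) (hOre : OreCondition E)
    (huv : u ≠ v) (hne : ¬ E u v)
    (h1 : (oneConnectors E u v : ℝ) < 2 ^ (-24 : ℤ) * Fintype.card V)
    (h2 : (twoConnectors E u v : ℝ) < 2 ^ (-24 : ℤ) * (Fintype.card V : ℝ) ^ 2) :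
    (3 * Fintype.card V - 3) / 4 - degMinus E v - ((degPlus E u : ℝ) - 1) / 2
      - Fintype.card V / 32 ≤ (#(secondOutNbhd E u) : ℝ) := by
  have hU := (Nat.cast_le (α := ℝ)).2 (sum_degPlus_outNbhd_le hor huv hne)
  have he := (Nat.cast_le (α := ℝ)).2 (hor.two_mul_card_arcs_add_card_le (outNbhd E u))
  have hr := (Nat.cast_le (α := ℝ)).2 (card_remote_add_le hor huv hne)
  push_cast [card_outNbhd] at hU he hr
  have hL := sum_degPlus_outNbhd_ge hor hOre hne
  have herr := sum_degPlus_error_le (hOre.degPlus_ge hor u) (Nat.cast_nonneg (degMinus E v))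
    (Nat.cast_nonneg _) (lt_of_lt_two_zpow_neg_24_mul h1).le
    (lt_of_lt_two_zpow_neg_24_mul h2).le sum_remote_le (Nat.cast_nonneg _) hr
    (hOre u v huv hne) (connectors_eq_zero_of_card_lt h1 h2)
  have hp : (0 : ℝ) < degPlus E u := by
    exact_mod_cast hOre.degPlus_pos hor (three_lt_card hor hOre huv hne h1) u
  refine sub_nonpos.1 (nonpos_of_mul_nonpos_left ?_ hp)
  linear_combination hL + hU + he / 2 + herr

theorem card_secondOutNbhd_ge_of_ore_pairs (hor : Oriented E) (hOre : OreCondition E)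
    (huv : u ≠ v) (hne : ¬ E u v)
    (h1 : (oneConnectors E u v : ℝ) < 2 ^ (-24 : ℤ) * Fintype.card V)
    (h2 : (twoConnectors E u v : ℝ) < 2 ^ (-24 : ℤ) * (Fintype.card V : ℝ) ^ 2)
    (h3 : (threeConnectors E u v : ℝ) < 2 ^ (-24 : ℤ) * (Fintype.card V : ℝ) ^ 3) :
    ((degPlus E u : ℝ) + degMinus E v) / 2 - Fintype.card V / 4 + 9 / 4
      - Fintype.card V / 32 ≤ (#(secondOutNbhd E u) : ℝ) := by
  have hU1 := (Nat.cast_le (α := ℝ)).2 (sum_degPlus_outNbhd_le hor huv hne)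
  have hU2 := (Nat.cast_le (α := ℝ)).2 (sum_degMinus_inNbhd_le hor huv hne)
  have he1 := (Nat.cast_le (α := ℝ)).2 (hor.two_mul_card_arcs_add_card_le (outNbhd E u))
  have he2 := (Nat.cast_le (α := ℝ)).2 (hor.two_mul_card_arcs_add_card_le (inNbhd E v))
  have hr := (Nat.cast_le (α := ℝ)).2 (card_remote_add_le hor huv hne)
  push_cast [card_outNbhd, card_inNbhd] at hU1 hU2 he1 he2 hr
  have hL := ore_sum_le_sum_degPlus_add_sum_degMinus hor hOre hne
  have hX := card_arcs_secondOutNbhd_lt hor hne h3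
  have hm8 : ((Fintype.card V : ℝ) - 3) / 8 ≤ degMinus E v := hOre.flip.degPlus_ge hor.flip v
  have herr := ore_pairs_error_le (hOre.degPlus_ge hor u) hm8
    (Nat.cast_nonneg _) (lt_of_lt_two_zpow_neg_24_mul h1).le
    (lt_of_lt_two_zpow_neg_24_mul h2).le hX.le sum_remote_le (Nat.cast_nonneg _) hr
    (hOre u v huv hne) fun hn =>
      have ⟨hc1, hc2, hR⟩ := connectors_eq_zero_of_card_lt h1 h2 hn
      ⟨hc1, hc2, card_arcs_secondOutNbhd_eq_zero hor hne h3 hn, hR⟩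
  have hn := three_lt_card hor hOre huv hne h1
  have hp : (0 : ℝ) < degPlus E u := by exact_mod_cast hOre.degPlus_pos hor hn u
  have hm : (0 : ℝ) < degMinus E v := by exact_mod_cast hOre.flip.degPlus_pos hor.flip hn v
  have hsS : 0 ≤ (oneConnectors E u v : ℝ) * ∑ x ∈ outNbhd E u, (degPlus E x : ℝ) := by positivity
  have hsT : 0 ≤ (oneConnectors E u v : ℝ) * ∑ y ∈ inNbhd E v, (degMinus E y : ℝ) := by positivity
  have hcQ : 0 ≤ (oneConnectors E u v : ℝ) ^ 2 * ((3 * Fintype.card V - 3) / 4) := by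
    have : (3 : ℝ) < Fintype.card V := by exact_mod_cast hn
    exact mul_nonneg (sq_nonneg _) (by linarith)
  refine sub_nonpos.1 (nonpos_of_mul_nonpos_left ?_ (mul_pos hp hm))
  linear_combination hL + (degMinus E v : ℝ) * hU1 + (degMinus E v : ℝ) / 2 * he1
    + (degPlus E u : ℝ) * hU2 + (degPlus E u : ℝ) / 2 * he2
    + (degPlus E u : ℝ) * degMinus E v * hr + herr + hsS + hsT + hcQ

end SecondOutNbhd

open scoped Classical in
theorem stmt_7 {V : Type} [Fintype V] [DecidableEq V] (E : V → V → Prop) [DecidableRel E]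
    (n : ℕ) (hn : Fintype.card V = n)
    (hor : Oriented E)
    (hOre : ∀ x y : V, x ≠ y → ¬ E x y →
      ((degPlus E x : ℝ) + (degMinus E y : ℝ)) ≥ (3 * n - 3) / 4)
    (u v : V) (huv : u ≠ v) (hne : ¬ E u v)
    (h1 : (oneConnectors E u v : ℝ) < (2 : ℝ) ^ (-24 : ℤ) * n)
    (h2 : (twoConnectors E u v : ℝ) < (2 : ℝ) ^ (-24 : ℤ) * (n : ℝ) ^ 2)
    (h3 : (threeConnectors E u v : ℝ) < (2 : ℝ) ^ (-24 : ℤ) * (n : ℝ) ^ 3) :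
    (((Finset.univ.filter fun w : V => ¬ E u w ∧
        ((Finset.univ.filter fun z : V => E u z ∧ E z w).card : ℝ)
          ≥ (2 : ℝ) ^ (-8 : ℤ) * n).card : ℝ)
      + ((Finset.univ.filter fun w : V => ¬ E w v ∧
        ((Finset.univ.filter fun z : V => E z v ∧ E w z).card : ℝ)
          ≥ (2 : ℝ) ^ (-8 : ℤ) * n).card : ℝ))
      > 11 * n / 16 - 9 * ((degPlus E u : ℝ) + (degMinus E v : ℝ)) / 16 := by
  subst hn
  have hOre : OreCondition E := hOre
  have h1' : (oneConnectors (flip E) v u : ℝ) < 2 ^ (-24 : ℤ) * Fintype.card V := by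
    rwa [oneConnectors_flip hor]
  have h2' : (twoConnectors (flip E) v u : ℝ) < 2 ^ (-24 : ℤ) * (Fintype.card V : ℝ) ^ 2 := by
    rwa [twoConnectors_flip hor hne]
  have h3' : (threeConnectors (flip E) v u : ℝ) < 2 ^ (-24 : ℤ) * (Fintype.card V : ℝ) ^ 3 := by
    rwa [threeConnectors_flip hor hne]
  have hA1 := card_secondOutNbhd_ge_of_sum_degPlus hor hOre huv hne h1 h2
  have hA2 := card_secondOutNbhd_ge_of_ore_pairs hor hOre huv hne h1 h2 h3
  have hB1 := card_secondOutNbhd_ge_of_sum_degPlus hor.flip hOre.flip huv.symm hne h1' h2'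
  have hB2 := card_secondOutNbhd_ge_of_ore_pairs hor.flip hOre.flip huv.symm hne h1' h2' h3'
  rw [degPlus_flip, degMinus_flip] at hB1 hB2
  convert (by linarith : (#(secondOutNbhd E u) : ℝ) + #(secondOutNbhd (flip E) v) >
    11 * Fintype.card V / 16 - 9 * ((degPlus E u : ℝ) + degMinus E v) / 16) using 4
  all_goals
    ext w
    rw [mem_filter, mem_secondOutNbhd, ← filter_filter,
      show (2 : ℝ) ^ (-8 : ℤ) * Fintype.card V = Fintype.card V / 256 by norm_num [div_eq_inv_mul]]
    exact ⟨fun h => h.2, fun h => ⟨mem_univ w, h⟩⟩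
end
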